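/- Fix a natural number m ≥ 2. Then: (1) for every natural number r ≥ 1 with 2r ≤ m+1 and (r : ℝ) ≤ r₂₁(m), one has h₂(m,r) ≤ h₂(m,r+1); (2) for every natural number r ≥ 1 with 2(r+1) ≤ m+1 and (r : ℝ) ≥ r₂₁(m), one has h₂(m,r+1) ≤ h₂(m,r); (3) consequently, for every natural number r with 1 ≤ r and 2r ≤ m+1, h₂(m,r) ≤ max( h₂(m, ⌊r₂₁(m)⌋₊), h₂(m, ⌈r₂₁(m)⌉₊) ), where ⌊·⌋₊ and ⌈·⌉₊ denote the floor and ceiling of a real number truncated to a natural number. -/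
import Mathlib


/-- `h₂(m,r) := choose(m−r, r−1)` (natural-number subtraction). -/
def h₂ (m r : ℕ) : ℕ := Nat.choose (m - r) (r - 1)

/-- `r₂₁(m) := (5m+2−√(5m²+4))/10`. -/
noncomputable def r₂₁ (m : ℕ) : ℝ :=
  (5 * (m : ℝ) + 2 - Real.sqrt (5 * (m : ℝ) ^ 2 + 4)) / 10

private lemma choose_aux (s k : ℕ) :
    Nat.choose (s + k + 1) s * ((k + 1) * (s + 1)) =
      (s + 1) * (s + k + 1) * Nat.choose (s + k) s ∧
    Nat.choose (s + k) (s + 1) * ((k + 1) * (s + 1)) =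
      k * (k + 1) * Nat.choose (s + k) s := by
  have h1 := Nat.choose_succ_right_eq (s + k + 1) s
  have e1 : s + k + 1 - s = k + 1 := by omega
  rw [e1] at h1
  have h2 := Nat.add_one_mul_choose_eq (s + k) s
  have h3 := Nat.choose_succ_right_eq (s + k) s
  have e3 : s + k - s = k := by omega
  rw [e3] at h3
  constructor
  · calc Nat.choose (s + k + 1) s * ((k + 1) * (s + 1))
        = (Nat.choose (s + k + 1) s * (k + 1)) * (s + 1) := by ring
      _ = (Nat.choose (s + k + 1) (s + 1) * (s + 1)) * (s + 1) := by rw [h1]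
      _ = ((s + k + 1) * Nat.choose (s + k) s) * (s + 1) := by rw [← h2]
      _ = (s + 1) * (s + k + 1) * Nat.choose (s + k) s := by ring
  · calc Nat.choose (s + k) (s + 1) * ((k + 1) * (s + 1))
        = (Nat.choose (s + k) (s + 1) * (s + 1)) * (k + 1) := by ring
      _ = (Nat.choose (s + k) s * k) * (k + 1) := by rw [h3]
      _ = k * (k + 1) * Nat.choose (s + k) s := by ring

private lemma choose_le_of (s k : ℕ) (h : (s + 1) * (s + k + 1) ≤ k * (k + 1)) :
    Nat.choose (s + k + 1) s ≤ Nat.choose (s + k) (s + 1) := by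
  obtain ⟨e1, e2⟩ := choose_aux s k
  have hD : 0 < Nat.choose (s + k) s := Nat.choose_pos (by omega)
  refine Nat.le_of_mul_le_mul_right ?_ (show 0 < (k + 1) * (s + 1) by positivity)
  rw [e1, e2]
  exact Nat.mul_le_mul_right _ h

private lemma choose_ge_of (s k : ℕ) (h : k * (k + 1) ≤ (s + 1) * (s + k + 1)) :
    Nat.choose (s + k) (s + 1) ≤ Nat.choose (s + k + 1) s := by
  obtain ⟨e1, e2⟩ := choose_aux s k
  refine Nat.le_of_mul_le_mul_right ?_ (show 0 < (k + 1) * (s + 1) by positivity)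
  rw [e1, e2]
  exact Nat.mul_le_mul_right _ h

set_option maxHeartbeats 1000000 in
theorem h₂_monotonicity_and_max (m : ℕ) (hm : 2 ≤ m) :
    (∀ r : ℕ, 1 ≤ r → 2 * r ≤ m + 1 → (r : ℝ) ≤ r₂₁ m → h₂ m r ≤ h₂ m (r + 1)) ∧
    (∀ r : ℕ, 1 ≤ r → 2 * (r + 1) ≤ m + 1 → r₂₁ m ≤ (r : ℝ) → h₂ m (r + 1) ≤ h₂ m r) ∧
    (∀ r : ℕ, 1 ≤ r → 2 * r ≤ m + 1 →
      h₂ m r ≤ max (h₂ m ⌊r₂₁ m⌋₊) (h₂ m ⌈r₂₁ m⌉₊)) := by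
  set S := Real.sqrt (5 * (m : ℝ) ^ 2 + 4) with hS
  have hS0 : (0 : ℝ) ≤ S := Real.sqrt_nonneg _
  have hSsq : S ^ 2 = 5 * (m : ℝ) ^ 2 + 4 := Real.sq_sqrt (by positivity)
  have hm1 : (1 : ℝ) ≤ (m : ℝ) := by exact_mod_cast (by omega : 1 ≤ m)
  have hS2 : (2 : ℝ) ≤ S := by nlinarith
  have hSlt : S < 5 * (m : ℝ) + 2 := by nlinarith
  -- part 1
  have P1 : ∀ r : ℕ, 1 ≤ r → 2 * r ≤ m + 1 → (r : ℝ) ≤ r₂₁ m → h₂ m r ≤ h₂ m (r + 1) := by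
    intro r hr1 hr2 hr3
    rw [r₂₁] at hr3
    have hs : S ≤ 5 * (m : ℝ) + 2 - 10 * r := by rw [hS]; linarith
    have hsq : 5 * (m : ℝ) ^ 2 + 4 ≤ (5 * (m : ℝ) + 2 - 10 * r) ^ 2 := by nlinarith
    -- 2r ≤ m
    have h2r : 2 * r ≤ m := by
      have : (10 : ℝ) * r ≤ 5 * m := by linarith
      have : (2 * r : ℕ) ≤ (m : ℝ) := by push_cast; linarith
      exact_mod_cast this
    obtain ⟨k, hk⟩ : ∃ k, m = 2 * r + k := ⟨m - 2 * r, by omega⟩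
    have hreal : (r : ℝ) * (r + k) ≤ k * (k + 1) := by
      have hmk : (m : ℝ) = 2 * r + k := by exact_mod_cast hk
      nlinarith [hsq, hmk]
    have hnat : r * (r + k) ≤ k * (k + 1) := by exact_mod_cast hreal
    obtain ⟨s, hrs⟩ : ∃ s, r = s + 1 := ⟨r - 1, by omega⟩
    subst hrs
    have e1 : m - (s + 1) = s + k + 1 := by omega
    have e2 : m - (s + 1 + 1) = s + k := by omega
    have e3 : s + 1 - 1 = s := by omega
    have e4 : s + 1 + 1 - 1 = s + 1 := by omega
    rw [h₂, h₂, e1, e2, e3, e4]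
    exact choose_le_of s k (by nlinarith [hnat])
  -- part 2
  have P2 : ∀ r : ℕ, 1 ≤ r → 2 * (r + 1) ≤ m + 1 → r₂₁ m ≤ (r : ℝ) → h₂ m (r + 1) ≤ h₂ m r := by
    intro r hr1 hr2 hr3
    rw [r₂₁] at hr3
    have hs : 5 * (m : ℝ) + 2 - 10 * r ≤ S := by rw [hS]; linarith
    have hrm : (10 : ℝ) * r ≤ 5 * m - 5 := by
      have : (2 * r + 1 : ℕ) ≤ (m : ℝ) := by exact_mod_cast (by omega : 2 * r + 1 ≤ m)
      push_cast at this; linarith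
    have hpos : (0 : ℝ) ≤ 5 * (m : ℝ) + 2 - 10 * r := by linarith
    have hsq : (5 * (m : ℝ) + 2 - 10 * r) ^ 2 ≤ 5 * (m : ℝ) ^ 2 + 4 := by nlinarith
    obtain ⟨k, hk⟩ : ∃ k, m = 2 * r + k := ⟨m - 2 * r, by omega⟩
    have hreal : (k : ℝ) * (k + 1) ≤ r * (r + k) := by
      have hmk : (m : ℝ) = 2 * r + k := by exact_mod_cast hk
      nlinarith [hsq, hmk]
    have hnat : k * (k + 1) ≤ r * (r + k) := by exact_mod_cast hreal
    obtain ⟨s, hrs⟩ : ∃ s, r = s + 1 := ⟨r - 1, by omega⟩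
    subst hrs
    have e1 : m - (s + 1) = s + k + 1 := by omega
    have e2 : m - (s + 1 + 1) = s + k := by omega
    have e3 : s + 1 - 1 = s := by omega
    have e4 : s + 1 + 1 - 1 = s + 1 := by omega
    rw [h₂, h₂, e1, e2, e3, e4]
    exact choose_ge_of s k (by nlinarith [hnat])
  refine ⟨P1, P2, ?_⟩
  -- part 3
  have hr0pos : 0 < r₂₁ m := by rw [r₂₁]; linarith
  have hr0nonneg : 0 ≤ r₂₁ m := le_of_lt hr0pos
  have hr0ub : 2 * r₂₁ m ≤ (m : ℝ) + 1 := by rw [r₂₁]; linarith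
  have hfloor : 2 * ⌊r₂₁ m⌋₊ ≤ m + 1 := by
    have h1 : (⌊r₂₁ m⌋₊ : ℝ) ≤ r₂₁ m := Nat.floor_le hr0nonneg
    have : ((2 * ⌊r₂₁ m⌋₊ : ℕ) : ℝ) ≤ ((m + 1 : ℕ) : ℝ) := by push_cast; linarith
    exact_mod_cast this
  have hceil1 : 1 ≤ ⌈r₂₁ m⌉₊ := Nat.ceil_pos.mpr hr0pos
  -- increasing chain up to the floor
  have up : ∀ d r : ℕ, 1 ≤ r → r + d = ⌊r₂₁ m⌋₊ → h₂ m r ≤ h₂ m ⌊r₂₁ m⌋₊ := by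
    intro d
    induction d with
    | zero => intro r _ h; simp at h; rw [h]
    | succ d ih =>
      intro r hr1 h
      have hle : r + 1 ≤ ⌊r₂₁ m⌋₊ := by omega
      have hler : (r : ℝ) + 1 ≤ r₂₁ m := by
        have := (Nat.le_floor_iff hr0nonneg).mp hle
        push_cast at this; linarith
      have h2r : 2 * r ≤ m + 1 := by omega
      calc h₂ m r ≤ h₂ m (r + 1) := P1 r hr1 h2r (by linarith)
        _ ≤ h₂ m ⌊r₂₁ m⌋₊ := ih (r + 1) (by omega) (by omega)
  -- decreasing chain down to the ceiling
  have down : ∀ d r : ℕ, ⌈r₂₁ m⌉₊ + d = r → 2 * r ≤ m + 1 → h₂ m r ≤ h₂ m ⌈r₂₁ m⌉₊ := by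
    intro d
    induction d with
    | zero => intro r h _; simp at h; rw [← h]
    | succ d ih =>
      intro r h h2r
      obtain ⟨r', hr'⟩ : ∃ r', r = r' + 1 := ⟨r - 1, by omega⟩
      subst hr'
      have hge : ⌈r₂₁ m⌉₊ ≤ r' := by omega
      have hger : r₂₁ m ≤ (r' : ℝ) := le_trans (Nat.le_ceil _) (by exact_mod_cast hge)
      calc h₂ m (r' + 1) ≤ h₂ m r' := P2 r' (by omega) (by omega) hger
        _ ≤ h₂ m ⌈r₂₁ m⌉₊ := ih r' (by omega) (by omega)
  intro r hr1 hr2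
  rcases le_or_gt r ⌊r₂₁ m⌋₊ with h | h
  · exact le_trans (up (⌊r₂₁ m⌋₊ - r) r hr1 (by omega)) (le_max_left _ _)
  · have hge : ⌈r₂₁ m⌉₊ ≤ r := le_trans (Nat.ceil_le_floor_add_one _) (by omega)
    exact le_trans (down (r - ⌈r₂₁ m⌉₊) r (by omega) hr2) (le_max_right _ _)
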